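/- The discrete vector field W on UD^nΓ has no non-stationary closed W-path: there is no W-path σ₀, σ₁, …, σ_r with σ_r = σ₀ and σ₁ ≠ σ₀. Hence W is a discrete gradient vector field. -/
import Mathlib


open SimpleGraph

attribute [local instance] Classical.propDecidable

namespace GraphBraid

/-- The degree of a vertex, defined via `Set.ncard` to avoid decidability assumptions. -/
noncomputable def ncdeg {V : Type} (H : SimpleGraph V) (v : V) : ℕ := (H.neighborSet v).ncard

/-- The basic setup: a finite connected simple graph `G` with a spanning tree `T`,
a root `root` of degree one in `T`, and a labelling of the edges of `T` incident to each
vertex `u` by the numbers `0, …, d_T(u) - 1`, where the edge towards the root receives the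
label `0` (and the unique edge at the root receives the label `1`). -/
structure Setup (V : Type) [Fintype V] [DecidableEq V] where
  G : SimpleGraph V
  G_conn : G.Connected
  T : SimpleGraph V
  T_le : T ≤ G
  T_tree : T.IsTree
  root : V
  root_deg : ncdeg T root = 1
  label : V → V → ℕ
  label_bij : ∀ u : V, u ≠ root → Set.BijOn (label u) (T.neighborSet u) (Set.Iio (ncdeg T u))
  label_zero : ∀ u : V, u ≠ root → ∀ w : V, T.Adj u w →
    (label u w = 0 ↔ T.dist root w + 1 = T.dist root u)
  label_root : ∀ w : V, T.Adj root w → label root w = 1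

namespace Setup

variable {V : Type} [Fintype V] [DecidableEq V] (S : Setup V)

/-- The unique geodesic (path) in the tree `T` from `u` to `w`. -/
noncomputable def geod (u w : V) : S.T.Walk u w := (S.T_tree.existsUnique_path u w).choose

/-- `g(u,w)`: the label at `u` of the first edge of the tree geodesic from `u` to `w`,
with `g(u,u) = 0`. -/
noncomputable def gfun (u w : V) : ℕ :=
  if u = w then 0 else S.label u ((S.geod u w).getVert 1)

lemma exists_wedge (u w : V) :
    ∃ x : V, (x ∈ (S.geod S.root u).support ∧ x ∈ (S.geod S.root w).support) ∧
      ∀ y : V, y ∈ (S.geod S.root u).support → y ∈ (S.geod S.root w).support →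
        S.T.dist S.root y ≤ S.T.dist S.root x := by
  classical
  have hne : ((S.geod S.root u).support.toFinset ∩
      (S.geod S.root w).support.toFinset).Nonempty :=
    ⟨S.root, by simp [SimpleGraph.Walk.start_mem_support]⟩
  obtain ⟨x, hx, hmax⟩ := Finset.exists_max_image _ (fun y => S.T.dist S.root y) hne
  simp only [Finset.mem_inter, List.mem_toFinset] at hx hmax
  exact ⟨x, ⟨hx.1, hx.2⟩, fun y h1 h2 => hmax y ⟨h1, h2⟩⟩

/-- `u ∧ w`: the vertex farthest from the root lying on both tree geodesics from the
root to `u` and from the root to `w`. -/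
noncomputable def wedge (u w : V) : V := (S.exists_wedge u w).choose

/-- The order on vertices: `u ≤ w` iff `u ∧ w = u`, or `u ∧ w ≠ u` and
`g(u ∧ w, u) < g(u ∧ w, w)`. -/
def vle (u w : V) : Prop :=
  S.wedge u w = u ∨ (S.wedge u w ≠ u ∧ S.gfun (S.wedge u w) u < S.gfun (S.wedge u w) w)

/-- The associated strict order on vertices. -/
def vlt (u w : V) : Prop := S.vle u w ∧ u ≠ w

/-- `ι(e)`: the larger endpoint of the edge `e` in the vertex order. -/
noncomputable def iota (e : Sym2 V) : V :=
  if S.vle (Quot.out e).1 (Quot.out e).2 then (Quot.out e).2 else (Quot.out e).1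

/-- `τ(e)`: the smaller endpoint of the edge `e` in the vertex order. -/
noncomputable def tau (e : Sym2 V) : V :=
  if S.vle (Quot.out e).1 (Quot.out e).2 then (Quot.out e).1 else (Quot.out e).2

/-- `e(v)`: the edge of `T` incident to `v` lying on the tree geodesic from `v` to the root. -/
noncomputable def eV (v : V) : Sym2 V := s(v, (S.geod v S.root).getVert 1)

/-- A cell of `UD^n Γ`: an `n`-element set whose elements are vertices (encoded as
diagonal elements of `Sym2 V`) and closed edges of `G`, no two distinct elements of which
share a vertex. -/
def IsCell (n : ℕ) (c : Finset (Sym2 V)) : Prop :=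
  c.card = n ∧ (∀ s ∈ c, s.IsDiag ∨ s ∈ S.G.edgeSet) ∧
    ∀ s ∈ c, ∀ t ∈ c, s ≠ t → ∀ x : V, x ∈ s → x ∉ t

/-- The dimension of a cell: the number of edges it contains. -/
noncomputable def dim (c : Finset (Sym2 V)) : ℕ := (c.filter (fun s => ¬ s.IsDiag)).card

/-- A vertex `v` is blocked in `c` if `v` is the root, or `e(v)` shares a vertex with some
element of `c` other than `v`. -/
def Blocked (c : Finset (Sym2 V)) (v : V) : Prop :=
  v = S.root ∨ ∃ s ∈ c, s ≠ Sym2.diag v ∧ ∃ x : V, x ∈ S.eV v ∧ x ∈ s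

/-- A vertex `v` is unblocked in `c` if it belongs to `c` and is not blocked. -/
def Unblocked (c : Finset (Sym2 V)) (v : V) : Prop := Sym2.diag v ∈ c ∧ ¬ S.Blocked c v

/-- The elementary reduction of `c` from the vertex `v`: replace `v` by the edge `e(v)`. -/
noncomputable def redFrom (c : Finset (Sym2 V)) (v : V) : Finset (Sym2 V) :=
  insert (S.eV v) (c.erase (Sym2.diag v))

/-- `c'` is the principal elementary reduction of `c`: it is the elementary reduction of `c`
from the smallest unblocked vertex of `c`. -/
def PrincipalRedOf (c c' : Finset (Sym2 V)) : Prop :=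
  ∃ v : V, S.Unblocked c v ∧ (∀ u : V, S.Unblocked c u → S.vle v u) ∧ c' = S.redFrom c v

/-- Auxiliary definition of redundancy, by induction on the dimension: a cell of
dimension `i` is redundant iff it has an unblocked vertex and it is not the principal
elementary reduction of a redundant cell of dimension `i - 1`. -/
def RedundantAux (n : ℕ) : ℕ → Finset (Sym2 V) → Prop
  | 0, c => ∃ v, S.Unblocked c v
  | (i + 1), c => (∃ v, S.Unblocked c v) ∧
      ¬ ∃ c₀, S.IsCell n c₀ ∧ dim c₀ = i ∧ RedundantAux n i c₀ ∧ S.PrincipalRedOf c₀ c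

/-- A cell is redundant if the discrete vector field `W` is defined on it. -/
def Redundant (n : ℕ) (c : Finset (Sym2 V)) : Prop := S.RedundantAux n (dim c) c

/-- A cell is collapsible if it lies in the image of `W`. -/
def Collapsible (n : ℕ) (c : Finset (Sym2 V)) : Prop :=
  ∃ c₀, S.IsCell n c₀ ∧ S.Redundant n c₀ ∧ S.PrincipalRedOf c₀ c

/-- A cell is critical if it is neither redundant nor collapsible. -/
def Critical (n : ℕ) (c : Finset (Sym2 V)) : Prop :=
  ¬ S.Redundant n c ∧ ¬ S.Collapsible n c

/-- An edge `e` of the cell `c` is order-respecting in `c` if `e` lies in `T` and every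
vertex `v ∈ c` such that `e(v)` and `e` share the vertex `τ(e)` satisfies `v > ι(e)`. -/
def OrderResp (c : Finset (Sym2 V)) (e : Sym2 V) : Prop :=
  e ∈ c ∧ e ∈ S.T.edgeSet ∧
    ∀ v : V, v ≠ S.root → Sym2.diag v ∈ c → S.tau e ∈ S.eV v → S.vlt (S.iota e) v

/-- `e` is the minimal order-respecting edge of `c`. -/
def MinOrderResp (c : Finset (Sym2 V)) (e : Sym2 V) : Prop :=
  S.OrderResp c e ∧ ∀ e' : Sym2 V, S.OrderResp c e' → S.vle (S.iota e) (S.iota e')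

/-- `c'` is a face of `c` obtained by replacing one edge of `c` by one of its endpoints. -/
def IsFace (c' c : Finset (Sym2 V)) : Prop :=
  ∃ (e : Sym2 V) (x : V), e ∈ c ∧ ¬ e.IsDiag ∧ x ∈ e ∧ c' = insert (Sym2.diag x) (c.erase e)

/-- `Γ` is sufficiently subdivided for `n`: every path between distinct vertices of degree
`≠ 2` passes through at least `n - 1` edges, and every cycle has length at least `n + 1`. -/
def SuffSubdiv (n : ℕ) : Prop :=
  (∀ u v : V, u ≠ v → ncdeg S.G u ≠ 2 → ncdeg S.G v ≠ 2 →
    ∀ p : S.G.Walk u v, p.IsPath → n - 1 ≤ p.length) ∧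
  (∀ v : V, ∀ p : S.G.Walk v v, p.IsCycle → n + 1 ≤ p.length)

end Setup


namespace Setup

variable {V : Type} [Fintype V] [DecidableEq V] (S : Setup V)

/-! ### Geodesics in the tree -/

lemma geod_isPath (u w : V) : (S.geod u w).IsPath :=
  (S.T_tree.existsUnique_path u w).choose_spec.1

lemma walk_eq_geod {u w : V} (p : S.T.Walk u w) (hp : p.IsPath) : p = S.geod u w :=
  (S.T_tree.existsUnique_path u w).choose_spec.2 p hp

lemma geod_nil (u : V) : S.geod u u = SimpleGraph.Walk.nil :=
  (S.walk_eq_geod _ Walk.IsPath.nil).symm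

lemma geod_length (u w : V) : (S.geod u w).length = S.T.dist u w := by
  obtain ⟨p, hp⟩ := Connected.exists_walk_length_eq_dist S.T_tree.isConnected u w
  have h1 : p.bypass = S.geod u w := S.walk_eq_geod _ p.bypass_isPath
  have h2 := SimpleGraph.dist_le (S.geod u w)
  have h3 := p.length_bypass_le
  have h4 : p.bypass.length = (S.geod u w).length := by rw [h1]
  omega

lemma geod_reverse (u w : V) : (S.geod u w).reverse = S.geod w u :=
  S.walk_eq_geod _ ((Walk.isPath_reverse_iff _).2 (S.geod_isPath u w))

/-- The parent of a vertex: the second vertex on the geodesic towards the root. -/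
noncomputable def par (v : V) : V := (S.geod v S.root).getVert 1

lemma eV_eq (v : V) : S.eV v = s(v, S.par v) := rfl

lemma geod_decomp {u w : V} (h : u ≠ w) :
    ∃ (c : V) (ha : S.T.Adj u c) (q : S.T.Walk c w),
      S.geod u w = SimpleGraph.Walk.cons ha q ∧ q = S.geod c w ∧ (S.geod u w).getVert 1 = c := by
  cases hp : S.geod u w with
  | nil => exact absurd rfl h
  | cons ha q =>
      refine ⟨_, ha, q, rfl, ?_, ?_⟩
      · exact S.walk_eq_geod q ((hp ▸ S.geod_isPath u w).of_cons)
      · simp [SimpleGraph.Walk.getVert_cons_succ, SimpleGraph.Walk.getVert_zero]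

lemma par_adj {u : V} (hu : u ≠ S.root) : S.T.Adj u (S.par u) := by
  obtain ⟨c, ha, q, -, -, hgv⟩ := S.geod_decomp hu
  rw [Setup.par, hgv]
  exact ha

lemma par_ne {u : V} (hu : u ≠ S.root) : S.par u ≠ u := fun h => (S.par_adj hu).ne' h

lemma geod_root_decomp {u : V} (hu : u ≠ S.root) :
    ∃ (ha : S.T.Adj u (S.par u)),
      S.geod u S.root = SimpleGraph.Walk.cons ha (S.geod (S.par u) S.root) := by
  obtain ⟨c, ha, q, h1, h2, hgv⟩ := S.geod_decomp hu
  have hc : S.par u = c := hgv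
  subst hc
  exact ⟨ha, by rw [h1, h2]⟩

lemma dist_par {u : V} (hu : u ≠ S.root) :
    S.T.dist S.root (S.par u) + 1 = S.T.dist S.root u := by
  obtain ⟨ha, hcons⟩ := S.geod_root_decomp hu
  have h1 := S.geod_length u S.root
  have h2 := S.geod_length (S.par u) S.root
  rw [hcons, SimpleGraph.Walk.length_cons, h2] at h1
  have e1 : S.T.dist S.root (S.par u) = S.T.dist (S.par u) S.root := SimpleGraph.dist_comm
  have e2 : S.T.dist S.root u = S.T.dist u S.root := SimpleGraph.dist_comm
  omega

/-! ### Label sequences and keys -/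

noncomputable def lseq {a b : V} (p : S.T.Walk a b) : List ℕ :=
  p.darts.map (fun d => S.label d.toProd.1 d.toProd.2)

lemma lseq_cons {a c b : V} (h : S.T.Adj a c) (p : S.T.Walk c b) :
    S.lseq (SimpleGraph.Walk.cons h p) = S.label a c :: S.lseq p := rfl

lemma lseq_append {a b c : V} (p : S.T.Walk a b) (q : S.T.Walk b c) :
    S.lseq (p.append q) = S.lseq p ++ S.lseq q := by
  unfold lseq; rw [SimpleGraph.Walk.darts_append, List.map_append]

lemma lseq_length {a b : V} (p : S.T.Walk a b) : (S.lseq p).length = p.length := by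
  unfold lseq; rw [List.length_map, SimpleGraph.Walk.length_darts]

noncomputable def key (u : V) : List ℕ := S.lseq (S.geod S.root u)

lemma key_length (u : V) : (S.key u).length = S.T.dist S.root u := by
  rw [Setup.key, lseq_length, geod_length]

lemma key_root : S.key S.root = [] := by rw [Setup.key, geod_nil]; rfl

lemma geod_root_concat {u : V} (hu : u ≠ S.root) :
    S.geod S.root u =
      (S.geod S.root (S.par u)).append
        (SimpleGraph.Walk.cons (S.par_adj hu).symm SimpleGraph.Walk.nil) := by
  obtain ⟨ha, hcons⟩ := S.geod_root_decomp hu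
  rw [← S.geod_reverse u S.root, hcons, SimpleGraph.Walk.reverse_cons, S.geod_reverse]

lemma key_concat {u : V} (hu : u ≠ S.root) :
    S.key u = S.key (S.par u) ++ [S.label (S.par u) u] := by
  rw [Setup.key, S.geod_root_concat hu, lseq_append]
  rfl

lemma geod_split {x u y : V} (h : y ∈ (S.geod x u).support) :
    S.geod x u = (S.geod x y).append (S.geod y u) := by
  have hp := S.geod_isPath x u
  have h1 : ((S.geod x u).takeUntil y h) = S.geod x y := S.walk_eq_geod _ (hp.takeUntil h)
  have h2 : ((S.geod x u).dropUntil y h) = S.geod y u := S.walk_eq_geod _ (hp.dropUntil h)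
  rw [← h1, ← h2, SimpleGraph.Walk.take_spec]

lemma key_prefix_of_mem {y u : V} (h : y ∈ (S.geod S.root u).support) :
    S.key y <+: S.key u :=
  ⟨S.lseq (S.geod y u), by
    simp only [Setup.key]
    rw [S.geod_split h, lseq_append]⟩

lemma key_inj : Function.Injective S.key := by
  have H : ∀ k u w, S.T.dist S.root u = k → S.key u = S.key w → u = w := by
    intro k
    induction k using Nat.strong_induction_on with
    | _ k IH =>
      intro u w hk hkey
      by_cases hu : u = S.root
      · subst hu
        rw [key_root] at hkey
        have : (S.key w).length = 0 := by rw [← hkey]; rfl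
        rw [key_length] at this
        have h0 : (S.geod S.root w).length = 0 := by rw [geod_length]; exact this
        exact SimpleGraph.Walk.eq_of_length_eq_zero h0
      · have hw : w ≠ S.root := by
          rintro rfl
          rw [key_root, S.key_concat hu] at hkey
          simp at hkey
        rw [S.key_concat hu, S.key_concat hw] at hkey
        have hlen : (S.key (S.par u)).length = (S.key (S.par w)).length := by
          have := congrArg List.length hkey
          simpa using this
        obtain ⟨hpar, hlab⟩ := List.append_inj hkey hlen
        have hd := S.dist_par hu
        have hpw : S.par u = S.par w :=
          IH (S.T.dist S.root (S.par u)) (by omega) _ _ rfl hpar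
        have hlabeq : S.label (S.par u) u = S.label (S.par u) w := by
          rw [← hpw] at hlab
          simpa using hlab
        have hau : u ∈ S.T.neighborSet (S.par u) := (S.par_adj hu).symm
        have haw : w ∈ S.T.neighborSet (S.par u) := by
          rw [hpw]; exact (S.par_adj hw).symm
        by_cases hm : S.par u = S.root
        · have hnc := S.root_deg
          rw [← hm] at hnc
          obtain ⟨x, hx⟩ := Set.ncard_eq_one.mp hnc
          rw [hx] at hau haw
          rw [hau, haw]
        · exact (S.label_bij _ hm).injOn hau haw hlabeq
  intro u w h
  exact H _ u w rfl h

lemma prefix_of_prefix_concat {l₁ l₂ : List ℕ} {a : ℕ} (h : l₁ <+: l₂ ++ [a])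
    (hlen : l₁.length ≤ l₂.length) : l₁ <+: l₂ := by
  rw [List.prefix_iff_eq_take] at h
  rw [List.take_append_of_le_length hlen] at h
  rw [h]
  exact List.take_prefix _ _

lemma mem_of_key_prefix : ∀ {y u : V}, S.key y <+: S.key u → y ∈ (S.geod S.root u).support := by
  have H : ∀ k u y, S.T.dist S.root u = k → S.key y <+: S.key u →
      y ∈ (S.geod S.root u).support := by
    intro k
    induction k using Nat.strong_induction_on with
    | _ k IH =>
      intro u y hk hpre
      by_cases heq : S.key y = S.key u
      · rw [S.key_inj heq]
        exact SimpleGraph.Walk.end_mem_support _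
      · by_cases hu : u = S.root
        · subst hu
          rw [S.key_root] at hpre heq
          exact absurd (List.prefix_nil.mp hpre) heq
        · have hcc := S.key_concat hu
          have hlen : (S.key y).length ≤ (S.key (S.par u)).length := by
            have h1 := hpre.length_le
            rw [hcc] at h1
            simp only [List.length_append, List.length_cons, List.length_nil] at h1
            have hne : (S.key y).length ≠ (S.key u).length := by
              intro hl
              exact heq (hpre.eq_of_length hl)
            have h2 : (S.key y).length < (S.key u).length :=
              lt_of_le_of_ne hpre.length_le hne
            rw [hcc] at h2
            simp only [List.length_append, List.length_cons, List.length_nil] at h2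
            omega
          have hpre' : S.key y <+: S.key (S.par u) :=
            prefix_of_prefix_concat (hcc ▸ hpre) hlen
          have hd := S.dist_par hu
          have hy := IH (S.T.dist S.root (S.par u)) (by omega) _ y rfl hpre'
          rw [S.geod_root_concat hu, SimpleGraph.Walk.support_append]
          exact List.mem_append_left _ hy
  intro y u h
  exact H _ u y rfl h

lemma exists_deepest : ∀ u w : V, ∃ m : V,
    (S.key m <+: S.key u ∧ S.key m <+: S.key w) ∧
      ∀ y, S.key y <+: S.key u → S.key y <+: S.key w → S.key y <+: S.key m := by
  have H : ∀ k u w, S.T.dist S.root u = k → ∃ m : V,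
      (S.key m <+: S.key u ∧ S.key m <+: S.key w) ∧
        ∀ y, S.key y <+: S.key u → S.key y <+: S.key w → S.key y <+: S.key m := by
    intro k
    induction k using Nat.strong_induction_on with
    | _ k IH =>
      intro u w hk
      by_cases hp : S.key u <+: S.key w
      · exact ⟨u, ⟨List.prefix_refl _, hp⟩, fun y hyu _ => hyu⟩
      · have hu : u ≠ S.root := by
          rintro rfl
          exact hp (by rw [key_root]; exact List.nil_prefix)
        have hd := S.dist_par hu
        obtain ⟨m, ⟨hmu, hmw⟩, hmax⟩ :=
          IH (S.T.dist S.root (S.par u)) (by omega) (S.par u) w rfl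
        have hpu : S.key (S.par u) <+: S.key u := ⟨_, (S.key_concat hu).symm⟩
        refine ⟨m, ⟨hmu.trans hpu, hmw⟩, fun y hyu hyw => ?_⟩
        have hyne : S.key y ≠ S.key u := by
          rintro h
          exact hp (h ▸ hyw)
        have hylen : (S.key y).length ≤ (S.key (S.par u)).length := by
          have h2 : (S.key y).length < (S.key u).length :=
            lt_of_le_of_ne hyu.length_le (fun hl => hyne (hyu.eq_of_length hl))
          rw [S.key_concat hu] at h2
          simp only [List.length_append, List.length_cons, List.length_nil] at h2
          omega
        exact hmax y (prefix_of_prefix_concat ((S.key_concat hu) ▸ hyu) hylen) hyw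
  intro u w
  exact H _ u w rfl

lemma wedge_spec (u w : V) :
    (S.wedge u w ∈ (S.geod S.root u).support ∧ S.wedge u w ∈ (S.geod S.root w).support) ∧
      ∀ y : V, y ∈ (S.geod S.root u).support → y ∈ (S.geod S.root w).support →
        S.T.dist S.root y ≤ S.T.dist S.root (S.wedge u w) :=
  (S.exists_wedge u w).choose_spec

lemma key_wedge_left (u w : V) : S.key (S.wedge u w) <+: S.key u :=
  S.key_prefix_of_mem (S.wedge_spec u w).1.1

lemma key_wedge_right (u w : V) : S.key (S.wedge u w) <+: S.key w :=
  S.key_prefix_of_mem (S.wedge_spec u w).1.2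

lemma prefix_key_wedge {y u w : V} (h1 : S.key y <+: S.key u) (h2 : S.key y <+: S.key w) :
    S.key y <+: S.key (S.wedge u w) := by
  obtain ⟨m, ⟨hmu, hmw⟩, hmax⟩ := S.exists_deepest u w
  have hy : S.key y <+: S.key m := hmax y h1 h2
  have hm1 : S.T.dist S.root m ≤ S.T.dist S.root (S.wedge u w) :=
    (S.wedge_spec u w).2 m (S.mem_of_key_prefix hmu) (S.mem_of_key_prefix hmw)
  have hwm : S.key (S.wedge u w) <+: S.key m :=
    hmax _ (S.key_wedge_left u w) (S.key_wedge_right u w)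
  have hlen : (S.key (S.wedge u w)).length = (S.key m).length := by
    have := hwm.length_le
    rw [key_length, key_length] at *
    omega
  rw [← hwm.eq_of_length hlen] at hy
  exact hy

lemma wedge_self (u : V) : S.wedge u u = u := by
  have h1 := S.key_wedge_left u u
  have h2 := S.prefix_key_wedge (List.prefix_refl (S.key u)) (List.prefix_refl (S.key u))
  exact S.key_inj (h1.eq_of_length (le_antisymm h1.length_le h2.length_le))

/-! ### The order on vertices via keys -/

lemma gfun_self (u : V) : S.gfun u u = 0 := by simp [Setup.gfun]

lemma lt_append_cons (l t : List ℕ) (a : ℕ) : l < l ++ a :: t := by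
  induction l with
  | nil => exact List.Lex.nil
  | cons x l ih => exact List.Lex.cons ih

lemma lt_of_lt_head {r₁ r₂ : List ℕ} {a b : ℕ} (l : List ℕ) (hab : a < b) :
    (l ++ a :: r₁) < (l ++ b :: r₂) := by
  induction l with
  | nil => exact List.Lex.rel hab
  | cons x l ih => exact List.Lex.cons ih

lemma next_vertex {m u : V} (hmu : m ≠ u) (hmem : m ∈ (S.geod S.root u).support) :
    ∃ c, S.key c = S.key m ++ [S.gfun m u] ∧ S.key c <+: S.key u := by
  obtain ⟨c, ha, q, hcons, hq, hgv⟩ := S.geod_decomp hmu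
  have hsplit := S.geod_split hmem
  have hku : S.key u = S.key m ++ S.lseq (S.geod m u) := by
    simp only [Setup.key]
    rw [hsplit, lseq_append]
  have hcmem : c ∈ (S.geod S.root u).support := by
    rw [hsplit, SimpleGraph.Walk.support_append]
    refine List.mem_append_right _ ?_
    rw [hcons]
    simpa [SimpleGraph.Walk.support_cons] using q.start_mem_support
  have hkeyc : S.key u = S.key c ++ S.lseq (S.geod c u) := by
    simp only [Setup.key]
    rw [S.geod_split hcmem, lseq_append]
  have hlm : S.lseq (S.geod m u) = S.label m c :: S.lseq (S.geod c u) := by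
    rw [hcons, lseq_cons, hq]
  have hkc : S.key c = S.key m ++ [S.label m c] := by
    have h1 : S.key c ++ S.lseq (S.geod c u)
        = (S.key m ++ [S.label m c]) ++ S.lseq (S.geod c u) := by
      rw [← hkeyc, hku, hlm, List.append_assoc]
      rfl
    exact List.append_cancel_right h1
  have hg : S.gfun m u = S.label m c := by
    simp only [Setup.gfun, if_neg hmu]
    rw [hgv]
  exact ⟨c, by rw [hg]; exact hkc, ⟨S.lseq (S.geod c u), hkeyc.symm⟩⟩

lemma vle_iff_key (u w : V) : S.vle u w ↔ S.key u ≤ S.key w := by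
  simp only [Setup.vle]
  by_cases h1 : S.key u <+: S.key w
  · have hw : S.wedge u w = u := by
      have ha := S.key_wedge_left u w
      have hb := S.prefix_key_wedge (List.prefix_refl (S.key u)) h1
      exact S.key_inj (ha.eq_of_length (le_antisymm ha.length_le hb.length_le))
    constructor
    · intro _
      obtain ⟨t, ht⟩ := h1
      cases t with
      | nil => rw [← ht]; simp
      | cons a t => rw [← ht]; exact le_of_lt (lt_append_cons _ _ _)
    · intro _
      exact Or.inl hw
  · by_cases h2 : S.key w <+: S.key u
    · have hne : S.key w ≠ S.key u := fun h => h1 (h ▸ List.prefix_refl _)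
      obtain ⟨t, ht⟩ := h2
      have htne : t ≠ [] := by
        rintro rfl
        simp only [List.append_nil] at ht
        exact hne ht
      obtain ⟨a, t', rfl⟩ := List.exists_cons_of_ne_nil htne
      have hlt : S.key w < S.key u := by rw [← ht]; exact lt_append_cons _ _ _
      have hww : S.wedge u w = w := by
        have ha := S.key_wedge_right u w
        have hb := S.prefix_key_wedge ⟨_, ht⟩ (List.prefix_refl (S.key w))
        exact S.key_inj (ha.eq_of_length (le_antisymm ha.length_le hb.length_le))
      have huw : u ≠ w := by
        rintro rfl
        exact h1 (List.prefix_refl _)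
      constructor
      · rintro (h | ⟨hne', hg⟩)
        · have : w = u := by rw [← hww, h]
          exact absurd this.symm huw
        · rw [hww, S.gfun_self] at hg
          exact absurd hg (Nat.not_lt_zero _)
      · intro hle
        exact absurd hlt (not_lt.mpr hle)
    · have hmnu : S.wedge u w ≠ u := by
        intro h
        exact h1 (h ▸ S.key_wedge_right u w)
      have hmnw : S.wedge u w ≠ w := by
        intro h
        exact h2 (h ▸ S.key_wedge_left u w)
      obtain ⟨c₁, hkc₁, hc₁u⟩ := S.next_vertex hmnu (S.wedge_spec u w).1.1
      obtain ⟨c₂, hkc₂, hc₂w⟩ := S.next_vertex hmnw (S.wedge_spec u w).1.2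
      have hab : S.gfun (S.wedge u w) u ≠ S.gfun (S.wedge u w) w := by
        intro h
        have hcc : c₁ = c₂ := S.key_inj (by rw [hkc₁, hkc₂, h])
        subst hcc
        have hpp := S.prefix_key_wedge hc₁u hc₂w
        have hlen := hpp.length_le
        rw [hkc₁] at hlen
        simp at hlen
      obtain ⟨r₁, hr₁⟩ : ∃ r₁, S.key u = S.key (S.wedge u w) ++ S.gfun (S.wedge u w) u :: r₁ := by
        obtain ⟨t, ht⟩ := hc₁u
        exact ⟨t, by rw [← ht, hkc₁, List.append_assoc]; rfl⟩
      obtain ⟨r₂, hr₂⟩ : ∃ r₂, S.key w = S.key (S.wedge u w) ++ S.gfun (S.wedge u w) w :: r₂ := by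
        obtain ⟨t, ht⟩ := hc₂w
        exact ⟨t, by rw [← ht, hkc₂, List.append_assoc]; rfl⟩
      constructor
      · rintro (h | ⟨-, hg⟩)
        · exact absurd h hmnu
        · rw [hr₁, hr₂]
          exact le_of_lt (lt_of_lt_head _ hg)
      · intro hle
        rcases lt_trichotomy (S.gfun (S.wedge u w) u) (S.gfun (S.wedge u w) w) with h | h | h
        · exact Or.inr ⟨hmnu, h⟩
        · exact absurd h hab
        · have hlt : S.key w < S.key u := by
            rw [hr₁, hr₂]
            exact lt_of_lt_head _ h
          exact absurd hlt (not_lt.mpr hle)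

lemma vlt_iff_key (u w : V) : S.vlt u w ↔ S.key u < S.key w := by
  simp only [Setup.vlt]
  constructor
  · rintro ⟨hle, hne⟩
    exact lt_of_le_of_ne ((S.vle_iff_key u w).mp hle) (fun h => hne (S.key_inj h))
  · intro h
    exact ⟨(S.vle_iff_key u w).mpr h.le, fun he => absurd (he ▸ h) (lt_irrefl _)⟩

lemma vle_refl (u : V) : S.vle u u := (S.vle_iff_key u u).mpr le_rfl

lemma par_root : S.par S.root = S.root := by rw [Setup.par, S.geod_nil]; rfl

lemma vlt_par {u : V} (hu : u ≠ S.root) : S.vlt (S.par u) u := by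
  rw [S.vlt_iff_key]
  rw [S.key_concat hu]
  exact lt_append_cons _ _ _

/-! ### iota and tau -/

lemma out_mk (e : Sym2 V) : s((Quot.out e).1, (Quot.out e).2) = e := Quot.out_eq e

lemma iota_tau_mk {a b : V} (h : S.vle b a) (h2 : ¬ S.vle a b) :
    S.iota s(a, b) = a ∧ S.tau s(a, b) = b := by
  have hout := out_mk s(a, b)
  rw [Sym2.eq_iff] at hout
  simp only [Setup.iota, Setup.tau]
  rcases hout with ⟨hx, hy⟩ | ⟨hx, hy⟩
  · rw [hx, hy, if_neg h2, if_neg h2]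
    exact ⟨rfl, rfl⟩
  · rw [hx, hy, if_pos h, if_pos h]
    exact ⟨rfl, rfl⟩

lemma mem_diag_eq {v x : V} (h : x ∈ Sym2.diag v) : x = v := by
  have h' : x ∈ s(v, v) := h
  rw [Sym2.mem_iff] at h'
  tauto

lemma iota_mem' (e : Sym2 V) : S.iota e ∈ e := by
  simp only [Setup.iota]
  split
  · exact Sym2.out_snd_mem e
  · exact Sym2.out_fst_mem e

lemma iota_diag (v : V) : S.iota (Sym2.diag v) = v :=
  mem_diag_eq (S.iota_mem' (Sym2.diag v))

lemma mem_iota_tau {e : Sym2 V} {x : V} (hx : x ∈ e) : x = S.iota e ∨ x = S.tau e := by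
  have hout := out_mk e
  rw [← hout, Sym2.mem_iff] at hx
  simp only [Setup.iota, Setup.tau]
  by_cases h : S.vle (Quot.out e).1 (Quot.out e).2 <;>
    simp only [if_pos, if_neg, h, ite_true, ite_false] <;> tauto

lemma tau_mem (e : Sym2 V) : S.tau e ∈ e := by
  simp only [Setup.tau]
  split
  · exact Sym2.out_fst_mem e
  · exact Sym2.out_snd_mem e

lemma not_vle_of_vlt {a b : V} (h : S.vlt a b) : ¬ S.vle b a := by
  rw [S.vlt_iff_key] at h
  rw [S.vle_iff_key]
  exact not_le.mpr h

lemma par_of_notMem {a b : V} (hab : S.T.Adj a b) (h : a ∉ (S.geod b S.root).support) :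
    S.par a = b := by
  have hp : (SimpleGraph.Walk.cons hab (S.geod b S.root)).IsPath :=
    (SimpleGraph.Walk.cons_isPath_iff _ _).mpr ⟨S.geod_isPath _ _, h⟩
  have heq := S.walk_eq_geod _ hp
  rw [Setup.par, ← heq]
  simp [SimpleGraph.Walk.getVert_cons_succ, SimpleGraph.Walk.getVert_zero]

lemma adj_par {a b : V} (hab : S.T.Adj a b) : S.par a = b ∨ S.par b = a := by
  by_cases h : a ∈ (S.geod b S.root).support
  · right
    apply S.par_of_notMem hab.symm
    intro hb
    have h1 := congrArg SimpleGraph.Walk.length (S.geod_split h)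
    have h2 := congrArg SimpleGraph.Walk.length (S.geod_split hb)
    rw [SimpleGraph.Walk.length_append] at h1 h2
    have h3 : (S.geod b a).length = 0 := by omega
    exact hab.ne' (SimpleGraph.Walk.eq_of_length_eq_zero h3)
  · left
    exact S.par_of_notMem hab h

lemma edge_dir_aux {a b : V} (hab : S.T.Adj a b) (hpar : S.par a = b) :
    S.iota s(a, b) = a ∧ S.tau s(a, b) = b ∧ a ≠ S.root := by
  have haroot : a ≠ S.root := by
    intro h
    subst h
    rw [S.par_root] at hpar
    exact hab.ne hpar
  have hvlt : S.vlt b a := hpar ▸ S.vlt_par haroot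
  obtain ⟨h1, h2⟩ := S.iota_tau_mk ((S.vle_iff_key b a).mpr
    (le_of_lt ((S.vlt_iff_key b a).mp hvlt))) (S.not_vle_of_vlt hvlt)
  exact ⟨h1, h2, haroot⟩

lemma edge_dir {e : Sym2 V} (he : e ∈ S.T.edgeSet) :
    S.iota e ≠ S.root ∧ e = S.eV (S.iota e) ∧ S.tau e = S.par (S.iota e) ∧
      S.vlt (S.tau e) (S.iota e) := by
  induction e using Sym2.ind with
  | _ a b =>
    have hab : S.T.Adj a b := (SimpleGraph.mem_edgeSet _).mp he
    rcases S.adj_par hab with hpar | hpar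
    · obtain ⟨h1, h2, h3⟩ := S.edge_dir_aux hab hpar
      refine ⟨by rw [h1]; exact h3, ?_, ?_, ?_⟩
      · rw [h1, Setup.eV, ← Setup.par, hpar]
      · rw [h1, h2, hpar]
      · rw [h1, h2, ← hpar]
        exact S.vlt_par h3
    · obtain ⟨h1, h2, h3⟩ := S.edge_dir_aux hab.symm hpar
      rw [Sym2.eq_swap (a := a)]
      refine ⟨by rw [h1]; exact h3, ?_, ?_, ?_⟩
      · rw [h1, Setup.eV, ← Setup.par, hpar]
      · rw [h1, h2, hpar]
      · rw [h1, h2, ← hpar]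
        exact S.vlt_par h3

lemma eV_mem_T {v : V} (hv : v ≠ S.root) : S.eV v ∈ S.T.edgeSet :=
  (SimpleGraph.mem_edgeSet _).mpr (S.par_adj hv)

lemma iota_eV {v : V} (hv : v ≠ S.root) :
    S.iota (S.eV v) = v ∧ S.tau (S.eV v) = S.par v := by
  have hvlt := S.vlt_par hv
  exact S.iota_tau_mk ((S.vle_iff_key _ _).mpr
    (le_of_lt ((S.vlt_iff_key _ _).mp hvlt))) (S.not_vle_of_vlt hvlt)

lemma eV_not_isDiag {v : V} (hv : v ≠ S.root) : ¬ (S.eV v).IsDiag := by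
  rw [Setup.eV_eq, Sym2.mk_isDiag_iff]
  exact fun h => S.par_ne hv h.symm

/-! ### Rank -/

noncomputable def rnk (v : V) : ℕ := (Finset.univ.filter (fun y => S.key y < S.key v)).card

lemma rnk_lt_card (v : V) : S.rnk v < Fintype.card V := by
  rw [← Finset.card_univ]
  apply Finset.card_lt_card
  refine ⟨Finset.filter_subset _ _, fun hsub => ?_⟩
  have := hsub (Finset.mem_univ v)
  simp only [Finset.mem_filter, Finset.mem_univ, true_and] at this
  exact absurd this (lt_irrefl _)

lemma rnk_mono {a b : V} (h : S.key a < S.key b) : S.rnk a < S.rnk b := by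
  apply Finset.card_lt_card
  constructor
  · intro y hy
    simp only [Finset.mem_filter, Finset.mem_univ, true_and] at *
    exact hy.trans h
  · intro h2
    have := h2 (by simp only [Finset.mem_filter, Finset.mem_univ, true_and]; exact h)
    simp only [Finset.mem_filter, Finset.mem_univ, true_and] at this
    exact absurd this (lt_irrefl _)

/-! ### Cells -/

lemma diag_isDiag (v : V) : (Sym2.diag v).IsDiag := by
  have : (s(v, v) : Sym2 V).IsDiag := Sym2.mk_isDiag_iff.mpr rfl
  exact this

lemma mem_diag_self (v : V) : v ∈ Sym2.diag v := by
  have : v ∈ s(v, v) := by simp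
  exact this

lemma mem_eV_iff {x v : V} : x ∈ S.eV v ↔ x = v ∨ x = S.par v := by
  rw [S.eV_eq]
  exact Sym2.mem_iff

lemma self_mem_eV (v : V) : v ∈ S.eV v := S.mem_eV_iff.mpr (Or.inl rfl)

lemma par_mem_eV (v : V) : S.par v ∈ S.eV v := S.mem_eV_iff.mpr (Or.inr rfl)

lemma diag_ne_eV {v w : V} (hw : w ≠ S.root) : Sym2.diag v ≠ S.eV w :=
  fun h => S.eV_not_isDiag hw (h ▸ diag_isDiag v)

lemma vlt_def {a b : V} : S.vlt a b ↔ S.vle a b ∧ a ≠ b := Iff.rfl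

lemma unbl_ne_root {c : Finset (Sym2 V)} {v : V} (h : S.Unblocked c v) : v ≠ S.root :=
  fun hv => h.2 (Or.inl hv)

lemma cell_disj {n : ℕ} {c : Finset (Sym2 V)} (hc : S.IsCell n c) {s t : Sym2 V}
    (hs : s ∈ c) (ht : t ∈ c) (hne : s ≠ t) {x : V} (hx : x ∈ s) : x ∉ t :=
  hc.2.2 s hs t ht hne x hx

lemma unblocked_iff {c : Finset (Sym2 V)} {v : V} :
    S.Unblocked c v ↔ Sym2.diag v ∈ c ∧ v ≠ S.root ∧
      ∀ s ∈ c, s ≠ Sym2.diag v → v ∉ s ∧ S.par v ∉ s := by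
  simp only [Setup.Unblocked, Setup.Blocked]
  constructor
  · rintro ⟨hd, hb⟩
    push_neg at hb
    obtain ⟨hroot, h2⟩ := hb
    exact ⟨hd, hroot, fun s hs hne =>
      ⟨fun hx => h2 s hs hne v (S.self_mem_eV v) hx,
       fun hx => h2 s hs hne (S.par v) (S.par_mem_eV v) hx⟩⟩
  · rintro ⟨hd, hroot, h⟩
    refine ⟨hd, ?_⟩
    rintro (h1 | ⟨s, hs, hne, x, hxe, hxs⟩)
    · exact hroot h1
    · rcases S.mem_eV_iff.mp hxe with rfl | rfl
      · exact (h s hs hne).1 hxs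
      · exact (h s hs hne).2 hxs

lemma eV_notMem {n : ℕ} {c : Finset (Sym2 V)} {v : V} (hc : S.IsCell n c)
    (hd : Sym2.diag v ∈ c) (hv : v ≠ S.root) : S.eV v ∉ c := fun h =>
  S.cell_disj hc h hd (fun he => S.diag_ne_eV hv he.symm) (S.self_mem_eV v)
    (mem_diag_self v)

lemma redFrom_isCell {n : ℕ} {c : Finset (Sym2 V)} {v : V} (hc : S.IsCell n c)
    (hv : S.Unblocked c v) : S.IsCell n (S.redFrom c v) := by
  obtain ⟨hcard, htok, hdisj⟩ := hc
  have hvroot := S.unbl_ne_root hv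
  have hub := S.unblocked_iff.mp hv
  have hEnotin : S.eV v ∉ c.erase (Sym2.diag v) := fun h =>
    (S.eV_notMem ⟨hcard, htok, hdisj⟩ hv.1 hvroot) (Finset.mem_of_mem_erase h)
  refine ⟨?_, ?_, ?_⟩
  · rw [Setup.redFrom, Finset.card_insert_of_notMem hEnotin,
      Finset.card_erase_of_mem hv.1, hcard]
    have h1 : 1 ≤ n := by
      rw [← hcard]
      exact Finset.card_pos.mpr ⟨_, hv.1⟩
    omega
  · intro s hs
    rcases Finset.mem_insert.mp hs with rfl | hs'
    · exact Or.inr (SimpleGraph.edgeSet_mono S.T_le (S.eV_mem_T hvroot))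
    · exact htok s (Finset.mem_of_mem_erase hs')
  · intro s hs t ht hne x hxs hxt
    rcases Finset.mem_insert.mp hs with rfl | hs' <;>
      rcases Finset.mem_insert.mp ht with rfl | ht'
    · exact hne rfl
    · have ht2 := Finset.mem_of_mem_erase ht'
      have htne := Finset.ne_of_mem_erase ht'
      rcases S.mem_eV_iff.mp hxs with rfl | rfl
      · exact (hub.2.2 t ht2 htne).1 hxt
      · exact (hub.2.2 t ht2 htne).2 hxt
    · have hs2 := Finset.mem_of_mem_erase hs'
      have hsne := Finset.ne_of_mem_erase hs'
      rcases S.mem_eV_iff.mp hxt with rfl | rfl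
      · exact (hub.2.2 s hs2 hsne).1 hxs
      · exact (hub.2.2 s hs2 hsne).2 hxs
    · exact hdisj s (Finset.mem_of_mem_erase hs') t (Finset.mem_of_mem_erase ht') hne x hxs hxt

lemma dim_erase_diag {c : Finset (Sym2 V)} (v : V) :
    Setup.dim (c.erase (Sym2.diag v)) = Setup.dim c := by
  simp only [Setup.dim]
  rw [Finset.filter_erase]
  rw [Finset.erase_eq_of_notMem]
  intro h
  have := (Finset.mem_filter.mp h).2
  exact this (diag_isDiag v)

lemma dim_insert_diag {c : Finset (Sym2 V)} (v : V) :
    Setup.dim (insert (Sym2.diag v) c) = Setup.dim c := by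
  simp only [Setup.dim]
  rw [Finset.filter_insert, if_neg]
  intro h
  exact h (diag_isDiag v)

lemma dim_insert_edge {c : Finset (Sym2 V)} {e : Sym2 V} (he : ¬ e.IsDiag) (hne : e ∉ c) :
    Setup.dim (insert e c) = Setup.dim c + 1 := by
  simp only [Setup.dim]
  rw [Finset.filter_insert, if_pos he, Finset.card_insert_of_notMem]
  intro h
  exact hne (Finset.mem_filter.mp h).1

lemma dim_erase_edge {c : Finset (Sym2 V)} {e : Sym2 V} (he : ¬ e.IsDiag) (hme : e ∈ c) :
    Setup.dim (c.erase e) + 1 = Setup.dim c := by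
  simp only [Setup.dim]
  rw [Finset.filter_erase, Finset.card_erase_of_mem (Finset.mem_filter.mpr ⟨hme, he⟩)]
  have : 0 < (Finset.filter (fun s => ¬s.IsDiag) c).card :=
    Finset.card_pos.mpr ⟨e, Finset.mem_filter.mpr ⟨hme, he⟩⟩
  omega

lemma dim_redFrom {n : ℕ} {c : Finset (Sym2 V)} {v : V} (hc : S.IsCell n c)
    (hv : S.Unblocked c v) : Setup.dim (S.redFrom c v) = Setup.dim c + 1 := by
  have hvroot := S.unbl_ne_root hv
  rw [Setup.redFrom, dim_insert_edge (S.eV_not_isDiag hvroot)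
    (fun h => S.eV_notMem hc hv.1 hvroot (Finset.mem_of_mem_erase h)),
    dim_erase_diag]

lemma princ_inv {n : ℕ} {c₀ c : Finset (Sym2 V)} (hc₀ : S.IsCell n c₀) {v : V}
    (hv : S.Unblocked c₀ v) (heq : c = S.redFrom c₀ v) :
    S.eV v ∈ c ∧ Sym2.diag v ∉ c ∧ c₀ = insert (Sym2.diag v) (c.erase (S.eV v)) ∧
      c.erase (S.eV v) = c₀.erase (Sym2.diag v) := by
  have hvroot := S.unbl_ne_root hv
  have hE : S.eV v ∉ c₀ := S.eV_notMem hc₀ hv.1 hvroot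
  have hE' : S.eV v ∉ c₀.erase (Sym2.diag v) := fun h => hE (Finset.mem_of_mem_erase h)
  subst heq
  refine ⟨Finset.mem_insert_self _ _, ?_, ?_, ?_⟩
  · intro h
    rcases Finset.mem_insert.mp h with h | h
    · exact S.diag_ne_eV hvroot h
    · exact (Finset.notMem_erase _ _) h
  · rw [Setup.redFrom, Finset.erase_insert hE', Finset.insert_erase hv.1]
  · rw [Setup.redFrom, Finset.erase_insert hE']

/-! ### Classification of redundant cells -/

/-- `v` is the minimal unblocked vertex of `c`. -/
def MinUnbl (c : Finset (Sym2 V)) (v : V) : Prop :=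
  S.Unblocked c v ∧ ∀ u, S.Unblocked c u → S.vle v u

/-- `c` has a minimal unblocked vertex which is smaller than `ι e` for every
order-respecting edge `e`. -/
def Rtype (c : Finset (Sym2 V)) : Prop :=
  ∃ v, S.MinUnbl c v ∧ ∀ e, S.OrderResp c e → S.vlt v (S.iota e)

lemma unbl_collapse {n : ℕ} {c : Finset (Sym2 V)} (hc : S.IsCell n c) {e : Sym2 V}
    (he : e ∈ c) (heT : e ∈ S.T.edgeSet) :
    S.Unblocked (insert (Sym2.diag (S.iota e)) (c.erase e)) (S.iota e) := by
  obtain ⟨hroot, heV, htau, hlt⟩ := S.edge_dir heT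
  rw [S.unblocked_iff]
  refine ⟨Finset.mem_insert_self _ _, hroot, ?_⟩
  intro s hs hne
  rcases Finset.mem_insert.mp hs with rfl | hs'
  · exact absurd rfl hne
  · have hs2 := Finset.mem_of_mem_erase hs'
    have hsne := Finset.ne_of_mem_erase hs'
    constructor
    · intro hx
      exact S.cell_disj hc he hs2 (fun h => hsne h.symm) (S.iota_mem' e) hx
    · intro hx
      have hpm : S.par (S.iota e) ∈ e := htau ▸ S.tau_mem e
      exact S.cell_disj hc he hs2 (fun h => hsne h.symm) hpm hx

theorem rtype_red {n : ℕ} {c : Finset (Sym2 V)} (hc : S.IsCell n c) (h : S.Rtype c) :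
    S.RedundantAux n (Setup.dim c) c := by
  obtain ⟨v, ⟨hv, hvmin⟩, hvOR⟩ := h
  have hex : ∃ v, S.Unblocked c v := ⟨v, hv⟩
  cases hdim : Setup.dim c with
  | zero => exact hex
  | succ i =>
    refine ⟨hex, ?_⟩
    rintro ⟨c₀, hc₀, hdim₀, -, hpr⟩
    simp only [Setup.PrincipalRedOf] at hpr
    obtain ⟨u, hu, humin, heq⟩ := hpr
    have huroot := S.unbl_ne_root hu
    obtain ⟨hEc, hdnc, hc₀eq, herase⟩ := S.princ_inv hc₀ hu heq
    have hvv := S.unblocked_iff.mp hv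
    -- OrderResp c (eV u)
    have hOR : S.OrderResp c (S.eV u) := by
      refine ⟨hEc, S.eV_mem_T huroot, ?_⟩
      intro z hzroot hz htau
      have htaueq : S.tau (S.eV u) = S.par u := (S.iota_eV huroot).2
      rw [htaueq, S.mem_eV_iff] at htau
      have hzu : z ≠ u := by rintro rfl; exact hdnc hz
      rcases htau with hz1 | hz2
      · exfalso
        have hzz : S.par u ∈ Sym2.diag z := by rw [hz1]; exact mem_diag_self z
        exact S.cell_disj hc hEc hz (fun hh => S.diag_ne_eV huroot hh.symm)
          (S.par_mem_eV u) hzz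
      · -- sibling of u
        have hzc₀ : Sym2.diag z ∈ c₀ := by
          rw [hc₀eq]
          exact Finset.mem_insert_of_mem (Finset.mem_erase.mpr ⟨S.diag_ne_eV huroot, hz⟩)
        have hub : S.Unblocked c₀ z := by
          rw [S.unblocked_iff]
          refine ⟨hzc₀, hzroot, ?_⟩
          intro s hs hne
          rw [hc₀eq] at hs
          rcases Finset.mem_insert.mp hs with rfl | hs'
          · constructor
            · intro hx; exact hzu (mem_diag_eq hx)
            · intro hx
              have h1 := mem_diag_eq hx
              rw [← hz2] at h1
              exact S.par_ne huroot h1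
          · have hs2 := Finset.mem_of_mem_erase hs'
            have hsne := Finset.ne_of_mem_erase hs'
            constructor
            · intro hx
              exact S.cell_disj hc hz hs2 (fun hh => hne hh.symm) (mem_diag_self z) hx
            · intro hx
              rw [← hz2] at hx
              exact S.cell_disj hc hEc hs2 (fun hh => hsne hh.symm) (S.par_mem_eV u) hx
        have h1 : S.vle u z := humin z hub
        rw [(S.iota_eV huroot).1]
        exact S.vlt_def.mpr ⟨h1, fun hh => hzu hh.symm⟩
    have hvu : S.vlt v (S.iota (S.eV u)) := hvOR _ hOR
    rw [(S.iota_eV huroot).1] at hvu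
    have hvne : v ≠ u := (S.vlt_def.mp hvu).2
    have hvc₀ : S.Unblocked c₀ v := by
      rw [S.unblocked_iff]
      refine ⟨?_, hvv.2.1, ?_⟩
      · rw [hc₀eq]
        exact Finset.mem_insert_of_mem (Finset.mem_erase.mpr ⟨S.diag_ne_eV huroot, hvv.1⟩)
      · intro s hs hne
        rw [hc₀eq] at hs
        rcases Finset.mem_insert.mp hs with rfl | hs'
        · constructor
          · intro hx; exact hvne (mem_diag_eq hx)
          · intro hx
            have h1 : S.par v = u := mem_diag_eq hx
            exact (hvv.2.2 (S.eV u) hEc (fun hh => S.diag_ne_eV huroot hh.symm)).2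
              (by rw [h1]; exact S.self_mem_eV u)
        · exact hvv.2.2 s (Finset.mem_of_mem_erase hs') hne
    have h1 := (S.vle_iff_key u v).mp (humin v hvc₀)
    have h2 := (S.vlt_iff_key v u).mp hvu
    exact absurd h2 (not_lt.mpr h1)

theorem red_rtype {n : ℕ} {c : Finset (Sym2 V)} (hc : S.IsCell n c)
    (h : S.RedundantAux n (Setup.dim c) c) : S.Rtype c := by
  -- extract an unblocked vertex
  have hex : ∃ v, S.Unblocked c v := by
    cases hdim : Setup.dim c with
    | zero => rw [hdim] at h; exact h
    | succ i => rw [hdim] at h; exact h.1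
  -- minimal unblocked vertex
  obtain ⟨v, hvmem, hvmin⟩ := Finset.exists_min_image
    (Finset.univ.filter (fun y => S.Unblocked c y)) S.key
    (by obtain ⟨v, hv⟩ := hex; exact ⟨v, Finset.mem_filter.mpr ⟨Finset.mem_univ _, hv⟩⟩)
  have hv : S.Unblocked c v := (Finset.mem_filter.mp hvmem).2
  have hvmin' : ∀ u, S.Unblocked c u → S.vle v u := fun u hu =>
    (S.vle_iff_key v u).mpr (hvmin u (Finset.mem_filter.mpr ⟨Finset.mem_univ _, hu⟩))
  refine ⟨v, ⟨hv, hvmin'⟩, ?_⟩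
  by_contra hbad
  push_neg at hbad
  obtain ⟨estar, hestar, hestarlt⟩ := hbad
  -- minimal order-respecting edge
  obtain ⟨e, hemem, hemin⟩ := Finset.exists_min_image
    (Finset.univ.filter (fun f => S.OrderResp c f)) (fun f => S.key (S.iota f))
    ⟨estar, Finset.mem_filter.mpr ⟨Finset.mem_univ _, hestar⟩⟩
  have he : S.OrderResp c e := (Finset.mem_filter.mp hemem).2
  have hemin' : ∀ f, S.OrderResp c f → S.key (S.iota e) ≤ S.key (S.iota f) := fun f hf =>
    hemin f (Finset.mem_filter.mpr ⟨Finset.mem_univ _, hf⟩)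
  obtain ⟨hec, heT, heOR⟩ := he
  obtain ⟨huroot, heV, htau, htlt⟩ := S.edge_dir heT
  -- iota estar ≠ v and iota estar < v
  have hesmem : S.iota estar ∈ estar := S.iota_mem' estar
  have hesne : S.iota estar ≠ v := by
    intro hh
    have hd : estar ≠ Sym2.diag v := fun hh2 =>
      S.T.not_isDiag_of_mem_edgeSet hestar.2.1 (by rw [hh2]; exact diag_isDiag v)
    exact S.cell_disj hc hestar.1 hv.1 hd hesmem (by rw [hh]; exact mem_diag_self v)
  have heslt : S.key (S.iota estar) < S.key v := by
    rcases lt_trichotomy (S.key (S.iota estar)) (S.key v) with hlt | heq | hgt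
    · exact hlt
    · exact absurd (S.key_inj heq) hesne
    · exact absurd (S.vlt_iff_key v (S.iota estar) |>.mpr hgt) hestarlt
  have helt : S.key (S.iota e) < S.key v :=
    lt_of_le_of_lt (hemin' estar hestar) heslt
  -- the candidate witness
  set u := S.iota e with hu
  have hend : ¬ e.IsDiag := S.T.not_isDiag_of_mem_edgeSet heT
  have huc : Sym2.diag u ∉ c := fun hh =>
    S.cell_disj hc hec hh
      (fun hh2 => hend (by rw [hh2]; exact diag_isDiag u))
      (S.iota_mem' e) (mem_diag_self u)
  set c₀ : Finset (Sym2 V) := insert (Sym2.diag u) (c.erase e) with hc₀def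
  have hc₀cell : S.IsCell n c₀ := by
    obtain ⟨hcard, htok, hdisj⟩ := hc
    have hdnotin : Sym2.diag u ∉ c.erase e := fun hh => huc (Finset.mem_of_mem_erase hh)
    refine ⟨?_, ?_, ?_⟩
    · rw [hc₀def, Finset.card_insert_of_notMem hdnotin, Finset.card_erase_of_mem hec, hcard]
      have h1 : 1 ≤ n := by rw [← hcard]; exact Finset.card_pos.mpr ⟨_, hec⟩
      omega
    · intro s hs
      rcases Finset.mem_insert.mp hs with rfl | hs'
      · exact Or.inl (diag_isDiag u)
      · exact htok s (Finset.mem_of_mem_erase hs')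
    · intro s hs t ht hne x hxs hxt
      rcases Finset.mem_insert.mp hs with rfl | hs' <;>
        rcases Finset.mem_insert.mp ht with rfl | ht'
      · exact hne rfl
      · have h1 : x = u := mem_diag_eq hxs
        subst h1
        exact S.cell_disj ⟨hcard, htok, hdisj⟩ hec (Finset.mem_of_mem_erase ht')
          (fun hh => (Finset.ne_of_mem_erase ht') hh.symm) (S.iota_mem' e) hxt
      · have h1 : x = u := mem_diag_eq hxt
        subst h1
        exact S.cell_disj ⟨hcard, htok, hdisj⟩ hec (Finset.mem_of_mem_erase hs')
          (fun hh => (Finset.ne_of_mem_erase hs') hh.symm) (S.iota_mem' e) hxs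
      · exact hdisj s (Finset.mem_of_mem_erase hs') t (Finset.mem_of_mem_erase ht') hne x hxs hxt
  have hredeq : c = S.redFrom c₀ u := by
    rw [Setup.redFrom, hc₀def, Finset.erase_insert
      (fun hh => huc (Finset.mem_of_mem_erase hh)), ← heV, Finset.insert_erase hec]
  have huunbl : S.Unblocked c₀ u := S.unbl_collapse hc hec heT
  -- u is minimal unblocked in c₀
  have humin : ∀ z, S.Unblocked c₀ z → S.vle u z := by
    intro z hz
    by_cases hzu : z = u
    · exact hzu ▸ S.vle_refl u
    · have hzz := S.unblocked_iff.mp hz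
      have hzc : Sym2.diag z ∈ c := by
        have h1 := hzz.1
        rw [hc₀def] at h1
        rcases Finset.mem_insert.mp h1 with h1 | h1
        · exact absurd (Sym2.diag_injective h1) hzu
        · exact Finset.mem_of_mem_erase h1
      by_cases hzunbl : S.Unblocked c z
      · exact (S.vle_iff_key u z).mpr (le_trans helt.le ((S.vle_iff_key v z).mp (hvmin' z hzunbl)))
      · -- z blocked in c, only possible blocker is e
        rw [S.unblocked_iff] at hzunbl
        push_neg at hzunbl
        obtain ⟨s, hs, hsne, hblk⟩ := hzunbl hzc hzz.2.1
        have hse : s = e := by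
          by_contra hsne2
          have hsc₀ : s ∈ c₀ := by
            rw [hc₀def]
            exact Finset.mem_insert_of_mem (Finset.mem_erase.mpr ⟨hsne2, hs⟩)
          have := hzz.2.2 s hsc₀ hsne
          tauto
        rw [hse] at hblk
        -- z or par z in e = {u, par u}
        have hblk2 : z ∈ e ∨ S.par z ∈ e := by tauto
        rcases hblk2 with hze | hpze
        · exfalso
          exact S.cell_disj hc hzc hec (fun hh => hend (by rw [← hh]; exact diag_isDiag z))
            (mem_diag_self z) hze
        · -- par z = u or par z = par u
          have hpze' : S.par z = u ∨ S.par z = S.par u := by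
            have := heV ▸ hpze
            exact S.mem_eV_iff.mp this
          rcases hpze' with hpz | hpz
          · -- diag u ∈ c₀ blocks z: contradiction with z unblocked in c₀
            exfalso
            have hduc₀ : Sym2.diag u ∈ c₀ := by rw [hc₀def]; exact Finset.mem_insert_self _ _
            have hne2 : Sym2.diag u ≠ Sym2.diag z := fun hh =>
              hzu (Sym2.diag_injective hh).symm
            exact (hzz.2.2 _ hduc₀ hne2).2 (by rw [hpz]; exact mem_diag_self u)
          · -- sibling: use OrderResp of e
            have := heOR z hzz.2.1 hzc (by rw [htau, ← hpz]; exact S.par_mem_eV z)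
            exact (S.vlt_def.mp this).1
  -- c₀ is Rtype, hence redundant
  have hc₀rtype : S.Rtype c₀ := by
    refine ⟨u, ⟨huunbl, humin⟩, ?_⟩
    intro f hf
    obtain ⟨hfc₀, hfT, hfOR⟩ := hf
    have hfnd : ¬ f.IsDiag := S.T.not_isDiag_of_mem_edgeSet hfT
    have hfc : f ∈ c := by
      rw [hc₀def] at hfc₀
      rcases Finset.mem_insert.mp hfc₀ with h1 | h1
      · exact absurd (show f.IsDiag by rw [h1]; exact diag_isDiag u) hfnd
      · exact Finset.mem_of_mem_erase h1
    have hfne : f ≠ e := by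
      rintro rfl
      rw [hc₀def] at hfc₀
      rcases Finset.mem_insert.mp hfc₀ with h1 | h1
      · exact absurd (show f.IsDiag by rw [h1]; exact diag_isDiag u) hfnd
      · exact (Finset.notMem_erase _ _) h1
    have hfORc : S.OrderResp c f := by
      refine ⟨hfc, hfT, ?_⟩
      intro z hzroot hzc hztau
      have hzu : z ≠ u := by
        rintro rfl
        exact huc hzc
      apply hfOR z hzroot _ hztau
      rw [hc₀def]
      exact Finset.mem_insert_of_mem (Finset.mem_erase.mpr
        ⟨fun hh => absurd (show (Sym2.diag z).IsDiag from diag_isDiag z)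
          (by rw [hh]; exact hend), hzc⟩)
    have h1 := hemin' f hfORc
    have h2 : S.iota f ≠ u := by
      intro hh
      obtain ⟨-, hfV, -, -⟩ := S.edge_dir hfT
      rw [hh] at hfV
      rw [← heV] at hfV
      exact hfne hfV
    rw [S.vlt_iff_key]
    exact lt_of_le_of_ne h1 (fun hh => h2 (S.key_inj hh.symm))
  -- contradiction with redundancy of c
  have hdimpos : 0 < Setup.dim c := by
    simp only [Setup.dim]
    exact Finset.card_pos.mpr ⟨e, Finset.mem_filter.mpr ⟨hec, hend⟩⟩
  obtain ⟨i, hi⟩ : ∃ i, Setup.dim c = i + 1 := ⟨Setup.dim c - 1, by omega⟩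
  rw [hi] at h
  apply h.2
  have hdimc₀ : Setup.dim c₀ = i := by
    have h1 := dim_erase_edge (c := c) hend hec
    rw [hc₀def, dim_insert_diag]
    omega
  refine ⟨c₀, hc₀cell, hdimc₀, ?_, ?_⟩
  · have hred := S.rtype_red hc₀cell hc₀rtype
    rwa [hdimc₀] at hred
  · simp only [Setup.PrincipalRedOf]
    exact ⟨u, huunbl, humin, hredeq⟩

end Setup

namespace Setup
variable {V : Type} [Fintype V] [DecidableEq V] (S : Setup V)

/-! ### The measures -/

noncomputable def mu (c : Finset (Sym2 V)) : ℕ := ∑ s ∈ c, 2 ^ (S.rnk (S.iota s))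

noncomputable def nonEV (c : Finset (Sym2 V)) : ℕ :=
  (c.filter (fun s => ¬ s.IsDiag ∧ s ≠ S.eV (S.iota s))).card

lemma eV_root : S.eV S.root = Sym2.diag S.root := by
  rw [S.eV_eq, S.par_root]
  rfl

lemma tau_lt_iota {e : Sym2 V} (hnd : ¬ e.IsDiag) : S.key (S.tau e) < S.key (S.iota e) := by
  have hne : (Quot.out e).1 ≠ (Quot.out e).2 := by
    intro hh
    apply hnd
    rw [← out_mk e]
    exact Sym2.mk_isDiag_iff.mpr hh
  simp only [Setup.iota, Setup.tau]
  by_cases h : S.vle (Quot.out e).1 (Quot.out e).2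
  · rw [if_pos h, if_pos h]
    exact lt_of_le_of_ne ((S.vle_iff_key _ _).mp h) (fun hh => hne (S.key_inj hh))
  · rw [if_neg h, if_neg h]
    exact not_le.mp (fun hh => h ((S.vle_iff_key _ _).mpr hh))

theorem move_lemma {n : ℕ} {c c' : Finset (Sym2 V)} (hc : S.IsCell n c) (hc' : S.IsCell n c')
    (hred' : S.Redundant n c') (hne : c' ≠ c)
    {w₀ : Finset (Sym2 V)} (hpr : S.PrincipalRedOf c w₀) (hface : Setup.IsFace c' w₀) :
    (S.mu c' < S.mu c) ∨
    (S.mu c' = S.mu c ∧ S.nonEV c' < S.nonEV c) ∨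
    (S.mu c' = S.mu c ∧ S.nonEV c' = S.nonEV c ∧
      ∀ vm, S.MinUnbl c vm → ∃ w, S.Unblocked c' w ∧ S.key w < S.key vm) := by
  simp only [Setup.PrincipalRedOf] at hpr
  obtain ⟨v, hv, hvmin, hw₀⟩ := hpr
  simp only [Setup.IsFace] at hface
  obtain ⟨f, x, hfw, hfnd, hxf, hc'eq⟩ := hface
  subst hw₀
  have hvroot := S.unbl_ne_root hv
  have hub := S.unblocked_iff.mp hv
  have hEnotin : S.eV v ∉ c := S.eV_notMem hc hv.1 hvroot
  have hEnotin' : S.eV v ∉ c.erase (Sym2.diag v) := fun h => hEnotin (Finset.mem_of_mem_erase h)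
  have hiotaeV : S.iota (S.eV v) = v := (S.iota_eV hvroot).1
  have hmuc : S.mu c = 2 ^ (S.rnk v) + S.mu (c.erase (Sym2.diag v)) := by
    rw [Setup.mu, Setup.mu, ← Finset.add_sum_erase c _ hv.1, S.iota_diag]
  by_cases hfe : f = S.eV v
  · -- case A : the new edge is collapsed again
    subst hfe
    rw [Setup.redFrom, Finset.erase_insert hEnotin'] at hc'eq
    rcases S.mem_eV_iff.mp hxf with rfl | rfl
    · -- x = v : c' = c, contradiction
      exfalso
      apply hne
      rw [hc'eq, Finset.insert_erase hv.1]
    · -- x = par v : strict mu decrease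
      left
      have hpd : Sym2.diag (S.par v) ∉ c.erase (Sym2.diag v) := by
        intro h
        have h1 := Finset.mem_of_mem_erase h
        have h2 : Sym2.diag (S.par v) ≠ Sym2.diag v :=
          fun hh => S.par_ne hvroot (Sym2.diag_injective hh)
        exact (hub.2.2 _ h1 h2).2 (mem_diag_self _)
      have hmu' : S.mu c' = 2 ^ (S.rnk (S.par v)) + S.mu (c.erase (Sym2.diag v)) := by
        rw [hc'eq, Setup.mu, Setup.mu, Finset.sum_insert hpd, S.iota_diag]
      have hrlt : S.rnk (S.par v) < S.rnk v :=
        S.rnk_mono ((S.vlt_iff_key _ _).mp (S.vlt_par hvroot))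
      have hplt : (2:ℕ) ^ (S.rnk (S.par v)) < 2 ^ (S.rnk v) :=
        Nat.pow_lt_pow_right (by norm_num) hrlt
      omega
  · -- case B : another edge is collapsed
    have hfc : f ∈ c ∧ f ≠ Sym2.diag v := by
      rw [Setup.redFrom] at hfw
      rcases Finset.mem_insert.mp hfw with h1 | h1
      · exact absurd h1 hfe
      · exact ⟨Finset.mem_of_mem_erase h1, Finset.ne_of_mem_erase h1⟩
    have hc'2 : c' = insert (Sym2.diag x) (insert (S.eV v) ((c.erase (Sym2.diag v)).erase f)) := by
      rw [hc'eq, Setup.redFrom, Finset.erase_insert_of_ne (fun hh => hfe hh.symm)]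
    have hfA : f ∈ c.erase (Sym2.diag v) := Finset.mem_erase.mpr ⟨hfc.2, hfc.1⟩
    have hEA : S.eV v ∉ (c.erase (Sym2.diag v)).erase f := fun h =>
      hEnotin' (Finset.mem_of_mem_erase h)
    have hdx : Sym2.diag x ∉ c := by
      intro h
      exact S.cell_disj hc hfc.1 h (fun hh => hfnd (by rw [hh]; exact diag_isDiag x))
        hxf (mem_diag_self x)
    have hdxA : Sym2.diag x ∉ insert (S.eV v) ((c.erase (Sym2.diag v)).erase f) := by
      intro h
      rcases Finset.mem_insert.mp h with h1 | h1
      · exact S.diag_ne_eV hvroot h1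
      · exact hdx (Finset.mem_of_mem_erase (Finset.mem_of_mem_erase h1))
    have hmuA : S.mu (c.erase (Sym2.diag v)) =
        2 ^ (S.rnk (S.iota f)) + S.mu ((c.erase (Sym2.diag v)).erase f) := by
      rw [Setup.mu, Setup.mu, ← Finset.add_sum_erase _ _ hfA]
    have hmu' : S.mu c' = 2 ^ (S.rnk x) + (2 ^ (S.rnk v) +
        S.mu ((c.erase (Sym2.diag v)).erase f)) := by
      rw [hc'2, Setup.mu, Finset.sum_insert hdxA, Finset.sum_insert hEA, S.iota_diag, hiotaeV]
      rfl
    rcases S.mem_iota_tau hxf with rfl | rfl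
    · -- x = iota f : mu is unchanged
      have hmueq : S.mu c' = S.mu c := by omega
      -- now compare nonEV
      have hfilter : c'.filter (fun s => ¬ s.IsDiag ∧ s ≠ S.eV (S.iota s)) =
          ((c.filter (fun s => ¬ s.IsDiag ∧ s ≠ S.eV (S.iota s))).erase (Sym2.diag v)).erase f := by
        rw [hc'2, Finset.filter_insert, if_neg, Finset.filter_insert, if_neg,
          Finset.filter_erase, Finset.filter_erase]
        · intro hh
          exact hh.2 (by rw [hiotaeV])
        · intro hh
          exact hh.1 (diag_isDiag _)
      have hdvnot : Sym2.diag v ∉ c.filter (fun s => ¬ s.IsDiag ∧ s ≠ S.eV (S.iota s)) := by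
        intro hh
        exact (Finset.mem_filter.mp hh).2.1 (diag_isDiag v)
      rw [Finset.erase_eq_of_notMem hdvnot] at hfilter
      by_cases hP : f = S.eV (S.iota f)
      · -- f is a tree edge of the form e(u) : nonEV unchanged, produce the witness
        right; right
        have hfnot : f ∉ c.filter (fun s => ¬ s.IsDiag ∧ s ≠ S.eV (S.iota s)) := by
          intro hh
          exact (Finset.mem_filter.mp hh).2.2 hP
        refine ⟨hmueq, by rw [Setup.nonEV, Setup.nonEV, hfilter, Finset.erase_eq_of_notMem hfnot], ?_⟩
        -- the key step
        intro vm hvm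
        have hkeyvm : S.key vm = S.key v := by
          have h1 := (S.vle_iff_key vm v).mp (hvm.2 v hv)
          have h2 := (S.vle_iff_key v vm).mp (hvmin vm hvm.1)
          exact le_antisymm h1 h2
        rw [hkeyvm]
        -- iota f =: u is not the root
        have huroot : S.iota f ≠ S.root := by
          intro hh
          rw [hh, S.eV_root] at hP
          exact hfnd (by rw [hP]; exact diag_isDiag _)
        -- classification of c'
        obtain ⟨m', ⟨hm'u, hm'min⟩, hm'OR⟩ := S.red_rtype hc' hred'
        -- e(v) is order-respecting in c'
        have hORev : S.OrderResp c' (S.eV v) := by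
          refine ⟨by rw [hc'2]; exact Finset.mem_insert_of_mem (Finset.mem_insert_self _ _),
            S.eV_mem_T hvroot, ?_⟩
          intro z hzroot hz htauz
          rw [(S.iota_eV hvroot).2, S.mem_eV_iff] at htauz
          rw [hiotaeV]
          have hzmem : z = S.iota f ∨ (Sym2.diag z ∈ c ∧ z ≠ v) := by
            rw [hc'2] at hz
            rcases Finset.mem_insert.mp hz with h1 | h1
            · exact Or.inl (Sym2.diag_injective h1)
            · rcases Finset.mem_insert.mp h1 with h2 | h2
              · exact absurd h2 (S.diag_ne_eV hvroot)
              · exact Or.inr ⟨Finset.mem_of_mem_erase (Finset.mem_of_mem_erase h2),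
                  fun hh => (Finset.ne_of_mem_erase (Finset.mem_of_mem_erase h2))
                    (by rw [hh])⟩
          rcases hzmem with rfl | ⟨hzc, hzv⟩
          · -- z = iota f : both cases contradict unblockedness of v (par v would be in f)
            exfalso
            rcases htauz with h1 | h1
            · exact (hub.2.2 f hfc.1 hfc.2).2 (by rw [h1]; exact S.iota_mem' f)
            · have hmem : S.par (S.iota f) ∈ f := by
                have h2 := S.par_mem_eV (S.iota f)
                rwa [← hP] at h2
              exact (hub.2.2 f hfc.1 hfc.2).2 (by rw [h1]; exact hmem)
          · rcases htauz with h1 | h1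
            · -- par v = z : z is a vertex of c containing par v
              exfalso
              have hne2 : Sym2.diag z ≠ Sym2.diag v := fun hh => hzv (Sym2.diag_injective hh)
              exact (hub.2.2 _ hzc hne2).2 (by rw [h1]; exact mem_diag_self z)
            · -- par v = par z : sibling, unblocked in c
              have hzunbl : S.Unblocked c z := by
                rw [S.unblocked_iff]
                refine ⟨hzc, hzroot, ?_⟩
                intro s hs hsne
                constructor
                · intro hxs
                  exact S.cell_disj hc hzc hs (fun hh => hsne hh.symm) (mem_diag_self z) hxs
                · intro hxs
                  rw [← h1] at hxs
                  by_cases hsv : s = Sym2.diag v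
                  · rw [hsv] at hxs
                    exact S.par_ne hvroot (mem_diag_eq hxs)
                  · exact (hub.2.2 s hs hsv).2 hxs
              exact S.vlt_def.mpr ⟨hvmin z hzunbl, fun hh => hzv hh.symm⟩
        have hfin := hm'OR _ hORev
        rw [hiotaeV] at hfin
        exact ⟨m', hm'u, (S.vlt_iff_key _ _).mp hfin⟩
      · -- f is not of the form e(u) : nonEV strictly decreases
        right; left
        refine ⟨hmueq, ?_⟩
        have hfin : f ∈ c.filter (fun s => ¬ s.IsDiag ∧ s ≠ S.eV (S.iota s)) :=
          Finset.mem_filter.mpr ⟨hfc.1, hfnd, hP⟩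
        rw [Setup.nonEV, Setup.nonEV, hfilter, Finset.card_erase_of_mem hfin]
        have : 0 < (c.filter (fun s => ¬ s.IsDiag ∧ s ≠ S.eV (S.iota s))).card :=
          Finset.card_pos.mpr ⟨f, hfin⟩
        omega
    · -- x = tau f : mu strictly decreases
      left
      have hrlt : S.rnk (S.tau f) < S.rnk (S.iota f) := S.rnk_mono (S.tau_lt_iota hfnd)
      have hplt : (2:ℕ) ^ (S.rnk (S.tau f)) < 2 ^ (S.rnk (S.iota f)) :=
        Nat.pow_lt_pow_right (by norm_num) hrlt
      omega
end Setup

/-- `W` has no non-stationary closed `W`-paths (hence is a discrete gradient vector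
field): every closed `W`-path `σ₀, …, σ_r` satisfies `σ₁ = σ₀`. -/
theorem stmt7 {V : Type} [Fintype V] [DecidableEq V] (S : Setup V) (n : ℕ) (hn : 1 ≤ n) (hsub : S.SuffSubdiv n)
    (σ : ℕ → Finset (Sym2 V)) (r : ℕ) (hr : 1 ≤ r)
    (hcell : ∀ i : ℕ, i ≤ r → S.IsCell n (σ i))
    (hstep : ∀ i : ℕ, i < r →
      (¬ S.Redundant n (σ i) → σ (i + 1) = σ i) ∧
      (S.Redundant n (σ i) → σ (i + 1) ≠ σ i ∧
        ∃ w : Finset (Sym2 V), S.PrincipalRedOf (σ i) w ∧ Setup.IsFace (σ (i + 1)) w))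
    (hclosed : σ r = σ 0) :
    σ 1 = σ 0 := by
  by_cases hred0 : S.Redundant n (σ 0)
  swap
  · exact (hstep 0 hr).1 hred0
  exfalso
  -- every cell along the path is redundant
  have hstay : ∀ i, i < r → ¬ S.Redundant n (σ i) → ∀ j, i ≤ j → j ≤ r → σ j = σ i := by
    intro i hi hnred j hij
    induction j, hij using Nat.le_induction with
    | base => intro _; rfl
    | succ j hij ih =>
      intro hjr
      have hj := ih (by omega)
      have h1 : ¬ S.Redundant n (σ j) := by rw [hj]; exact hnred
      have h2 := (hstep j (by omega)).1 h1
      rw [h2, hj]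
  have hredall : ∀ i, i ≤ r → S.Redundant n (σ i) := by
    intro i hir
    by_cases hi : i = r
    · subst hi; rw [hclosed]; exact hred0
    · by_contra hnred
      have h1 := hstay i (by omega) hnred r (by omega) le_rfl
      rw [hclosed] at h1
      apply hnred
      rw [← h1]
      exact hred0
  -- the move lemma applies at every step
  have hmove : ∀ i, i < r →
      (S.mu (σ (i+1)) < S.mu (σ i)) ∨
      (S.mu (σ (i+1)) = S.mu (σ i) ∧ S.nonEV (σ (i+1)) < S.nonEV (σ i)) ∨
      (S.mu (σ (i+1)) = S.mu (σ i) ∧ S.nonEV (σ (i+1)) = S.nonEV (σ i) ∧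
        ∀ vm, S.MinUnbl (σ i) vm → ∃ w, S.Unblocked (σ (i+1)) w ∧ S.key w < S.key vm) := by
    intro i hi
    obtain ⟨hne, w₀, hpr, hface⟩ := (hstep i hi).2 (hredall i (le_of_lt hi))
    exact S.move_lemma (hcell i (le_of_lt hi)) (hcell (i+1) hi) (hredall (i+1) hi) hne hpr hface
  -- mu is constant along the closed path
  have hmu_le : ∀ i, i < r → S.mu (σ (i+1)) ≤ S.mu (σ i) := by
    intro i hi
    rcases hmove i hi with h | h | h
    · exact h.le
    · exact h.1.le
    · exact h.1.le
  have hdown : ∀ j, j ≤ r → S.mu (σ j) ≤ S.mu (σ 0) := by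
    intro j
    induction j with
    | zero => intro _; exact le_rfl
    | succ j ih => intro hjr; exact le_trans (hmu_le j (by omega)) (ih (by omega))
  have hup : ∀ d j, j + d = r → S.mu (σ r) ≤ S.mu (σ j) := by
    intro d
    induction d with
    | zero =>
      intro j hj
      have hjr : j = r := by omega
      rw [hjr]
    | succ d ih =>
      intro j hj
      exact le_trans (ih (j+1) (by omega)) (hmu_le j (by omega))
  have hmustep : ∀ i, i < r → S.mu (σ (i+1)) = S.mu (σ i) := by
    intro i hi
    have h1 := hdown (i+1) hi
    have h2 := hup (r - (i+1)) (i+1) (by omega)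
    have h3 := hdown i (le_of_lt hi)
    have h4 := hup (r - i) i (by omega)
    rw [hclosed] at h2 h4
    omega
  -- nonEV is constant along the closed path
  have hnev_le : ∀ i, i < r → S.nonEV (σ (i+1)) ≤ S.nonEV (σ i) := by
    intro i hi
    rcases hmove i hi with h | h | h
    · exact absurd (hmustep i hi) (ne_of_lt h)
    · exact h.2.le
    · exact h.2.1.le
  have hnevdown : ∀ j, j ≤ r → S.nonEV (σ j) ≤ S.nonEV (σ 0) := by
    intro j
    induction j with
    | zero => intro _; exact le_rfl
    | succ j ih => intro hjr; exact le_trans (hnev_le j (by omega)) (ih (by omega))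
  have hnevup : ∀ d j, j + d = r → S.nonEV (σ r) ≤ S.nonEV (σ j) := by
    intro d
    induction d with
    | zero =>
      intro j hj
      have hjr : j = r := by omega
      rw [hjr]
    | succ d ih =>
      intro j hj
      exact le_trans (ih (j+1) (by omega)) (hnev_le j (by omega))
  have hnevstep : ∀ i, i < r → S.nonEV (σ (i+1)) = S.nonEV (σ i) := by
    intro i hi
    have h1 := hnevdown (i+1) hi
    have h2 := hnevup (r - (i+1)) (i+1) (by omega)
    have h3 := hnevdown i (le_of_lt hi)
    have h4 := hnevup (r - i) i (by omega)
    rw [hclosed] at h2 h4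
    omega
  -- hence every step strictly decreases the minimal unblocked vertex
  have hwit : ∀ i, i < r → ∀ vm, S.MinUnbl (σ i) vm →
      ∃ w, S.Unblocked (σ (i+1)) w ∧ S.key w < S.key vm := by
    intro i hi
    rcases hmove i hi with h | h | h
    · exact absurd (hmustep i hi) (ne_of_lt h)
    · exact absurd (hnevstep i hi) (ne_of_lt h.2)
    · exact h.2.2
  have hminex : ∀ i, i ≤ r → ∃ v, S.MinUnbl (σ i) v := by
    intro i hir
    obtain ⟨v, hv, -⟩ := S.red_rtype (hcell i hir) (hredall i hir)
    exact ⟨v, hv⟩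
  obtain ⟨v0, hv0⟩ := hminex 0 (by omega)
  have hchain : ∀ j, j ≤ r → ∀ vj, S.MinUnbl (σ j) vj →
      S.key vj ≤ S.key v0 ∧ (j ≠ 0 → S.key vj < S.key v0) := by
    intro j
    induction j with
    | zero =>
      intro _ vj hvj
      refine ⟨(S.vle_iff_key _ _).mp (hvj.2 v0 hv0.1), fun h => absurd rfl h⟩
    | succ j ih =>
      intro hjr vj hvj
      obtain ⟨vm, hvm⟩ := hminex j (by omega)
      obtain ⟨w, hw, hwlt⟩ := hwit j (by omega) vm hvm
      have h1 : S.key vj ≤ S.key w := (S.vle_iff_key _ _).mp (hvj.2 w hw)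
      have h2 := (ih (by omega) vm hvm).1
      have h3 : S.key vj < S.key v0 := lt_of_le_of_lt h1 (lt_of_lt_of_le hwlt h2)
      exact ⟨h3.le, fun _ => h3⟩
  obtain ⟨vr, hvr⟩ := hminex r le_rfl
  have hlt := (hchain r le_rfl vr hvr).2 (by omega)
  have hvr0 : S.MinUnbl (σ 0) vr := by rw [← hclosed]; exact hvr
  have h1 : S.key v0 ≤ S.key vr := (S.vle_iff_key _ _).mp (hv0.2 vr hvr0.1)
  exact absurd hlt (not_lt.mpr h1)

end GraphBraid
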